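/- Let z ∈ [1,2], let P be a finite set of points in ℝ^d, let w : P → [0,∞) be a weight function, and let M be an invertible d×d real matrix such that ‖Mx‖₂^z ≤ ∑_{q∈P} w(q)·|qᵀx|^z for every x ∈ ℝ^d. Then for every p ∈ P, sup_{x : ∑_{q∈P} w(q)|qᵀx|^z > 0} w(p)·|pᵀx|^z / ∑_{q∈P} w(q)·|qᵀx|^z ≤ w(p)·‖(Mᵀ)⁻¹p‖_z^z. -/

import Mathlib

/-!
Write `a = (Mᵀ)⁻¹ p`, so that `pᵀx = aᵀ(Mx)`. Cauchy–Schwarz together with `‖a‖₂ ≤ ‖a‖_z`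
(valid because `z ≤ 2`) gives `|pᵀx|^z ≤ ‖a‖_z^z ‖Mx‖₂^z`, and the hypothesis on `M` bounds
`‖Mx‖₂^z` by the denominator `∑_{q∈P} w(q)|qᵀx|^z`.
-/

open Matrix

/-- The Euclidean (`ℓ₂`) norm of a vector in `ℝ^d`. -/
noncomputable def l2 {d : ℕ} (x : Fin d → ℝ) : ℝ := Real.sqrt (∑ i, x i ^ 2)

theorem l2_nonneg {d : ℕ} (x : Fin d → ℝ) : 0 ≤ l2 x := Real.sqrt_nonneg _

theorem sum_sq_le_sum_abs_rpow_rpow {ι : Type*} (s : Finset ι) (f : ι → ℝ) {z : ℝ}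
    (hz₀ : 0 < z) (hz₂ : z ≤ 2) :
    ∑ i ∈ s, f i ^ 2 ≤ (∑ i ∈ s, |f i| ^ z) ^ (2 / z) := by
  set A := ∑ i ∈ s, |f i| ^ z
  have hA : 0 ≤ A := Finset.sum_nonneg fun i _ => by positivity
  have hexp : 0 ≤ 2 / z - 1 := by rw [sub_nonneg, le_div_iff₀ hz₀]; linarith
  have hsplit : ∀ t : ℝ, 0 ≤ t → t ^ (2 / z) = t * t ^ (2 / z - 1) := fun t ht => by
    rw [← Real.rpow_one_add' ht (by positivity), add_sub_cancel]
  -- `|f i| ^ z ≤ A`, and the exponent `2 / z - 1` is nonnegative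
  calc ∑ i ∈ s, f i ^ 2 = ∑ i ∈ s, (|f i| ^ z) ^ (2 / z) := by
        refine Finset.sum_congr rfl fun i _ => ?_
        rw [← Real.rpow_mul (abs_nonneg _), mul_div_cancel₀ _ hz₀.ne', Real.rpow_two, sq_abs]
    _ ≤ ∑ i ∈ s, |f i| ^ z * A ^ (2 / z - 1) := by
        refine Finset.sum_le_sum fun i hi => ?_
        rw [hsplit _ (by positivity)]
        gcongr
        exact Finset.single_le_sum (f := fun j => |f j| ^ z) (fun j _ => by positivity) hi
    _ = A ^ (2 / z) := by rw [← Finset.sum_mul, hsplit A hA]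

theorem abs_dotProduct_le_rpow_mul_l2 {d : ℕ} (a y : Fin d → ℝ) {z : ℝ}
    (hz₀ : 0 < z) (hz₂ : z ≤ 2) :
    |a ⬝ᵥ y| ≤ (∑ i, |a i| ^ z) ^ (1 / z) * l2 y := by
  have hA : 0 ≤ ∑ i, |a i| ^ z := Finset.sum_nonneg fun i _ => by positivity
  calc |a ⬝ᵥ y| ≤ √((∑ i, a i ^ 2) * ∑ i, y i ^ 2) :=
        Real.abs_le_sqrt (Finset.sum_mul_sq_le_sq_mul_sq _ _ _)
    _ ≤ √((∑ i, |a i| ^ z) ^ (2 / z) * ∑ i, y i ^ 2) := by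
        gcongr
        exact sum_sq_le_sum_abs_rpow_rpow _ _ hz₀ hz₂
    _ = (∑ i, |a i| ^ z) ^ (1 / z) * l2 y := by
        rw [Real.sqrt_mul (by positivity), l2, Real.sqrt_eq_rpow, ← Real.rpow_mul hA]
        ring_nf

theorem abs_dotProduct_rpow_le {d : ℕ} (a y : Fin d → ℝ) {z : ℝ}
    (hz₀ : 0 < z) (hz₂ : z ≤ 2) :
    |a ⬝ᵥ y| ^ z ≤ (∑ i, |a i| ^ z) * l2 y ^ z := by
  have hA : 0 ≤ ∑ i, |a i| ^ z := Finset.sum_nonneg fun i _ => by positivity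
  calc |a ⬝ᵥ y| ^ z ≤ ((∑ i, |a i| ^ z) ^ (1 / z) * l2 y) ^ z := by
        gcongr
        exact abs_dotProduct_le_rpow_mul_l2 a y hz₀ hz₂
    _ = (∑ i, |a i| ^ z) * l2 y ^ z := by
        rw [Real.mul_rpow (by positivity) (l2_nonneg y), ← Real.rpow_mul hA,
          one_div_mul_cancel hz₀.ne', Real.rpow_one]

theorem Matrix.dotProduct_eq_inv_transpose_mulVec_dotProduct_mulVec {n R : Type*} [Fintype n]
    [DecidableEq n] [CommRing R] {M : Matrix n n R} (hM : IsUnit M) (p x : n → R) :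
    p ⬝ᵥ x = ((Mᵀ)⁻¹ *ᵥ p) ⬝ᵥ (M *ᵥ x) := by
  rw [dotProduct_mulVec, ← transpose_nonsing_inv, mulVec_transpose, vecMul_vecMul,
    nonsing_inv_mul _ ((isUnit_iff_isUnit_det M).1 hM), vecMul_one]

/-- Sensitivity bound for `ℓ_z`-regression, `z ∈ [1,2]`: if `M` is an invertible matrix
with `‖Mx‖₂^z ≤ ∑_{q∈P} w(q)|qᵀx|^z` for every `x`, then the weighted sensitivity of each
`p ∈ P` is at most `w(p)·‖(Mᵀ)⁻¹p‖_z^z`. -/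
theorem lz_sensitivity_mid_z {d : ℕ} (z : ℝ) (hz : z ∈ Set.Icc (1 : ℝ) 2)
    (P : Finset (Fin d → ℝ)) (w : (Fin d → ℝ) → ℝ) (hw : ∀ p ∈ P, 0 ≤ w p)
    (M : Matrix (Fin d) (Fin d) ℝ) (hM : IsUnit M)
    (hMlow : ∀ x : Fin d → ℝ, l2 (M.mulVec x) ^ z ≤ ∑ q ∈ P, w q * |∑ i, q i * x i| ^ z) :
    ∀ p ∈ P,
      (⨆ x : {x : Fin d → ℝ // 0 < ∑ q ∈ P, w q * |∑ i, q i * x i| ^ z},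
        w p * |∑ i, p i * (x : Fin d → ℝ) i| ^ z /
          ∑ q ∈ P, w q * |∑ i, q i * (x : Fin d → ℝ) i| ^ z) ≤
      w p * ∑ i, |(Mᵀ)⁻¹.mulVec p i| ^ z := by
  intro p hp
  have hz₀ : 0 < z := by linarith [hz.1]
  refine Real.iSup_le (fun ⟨x, hx⟩ => ?_) (mul_nonneg (hw p hp) (by positivity))
  rw [div_le_iff₀ hx, mul_assoc]
  gcongr
  · exact hw p hp
  calc |p ⬝ᵥ x| ^ z = |((Mᵀ)⁻¹ *ᵥ p) ⬝ᵥ (M *ᵥ x)| ^ z := by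
        rw [dotProduct_eq_inv_transpose_mulVec_dotProduct_mulVec hM]
    _ ≤ (∑ i, |((Mᵀ)⁻¹ *ᵥ p) i| ^ z) * l2 (M *ᵥ x) ^ z := abs_dotProduct_rpow_le _ _ hz₀ hz.2
    _ ≤ _ := by gcongr; exact hMlow x
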